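/- Let w : Fin 2 → ℝ with each w i equal to 1 or −1, let Q be the diagonal quadratic form on Fin 2 → ℝ with weights w, let A = CliffordAlgebra Q, and let conj : A → A denote Clifford conjugation (reversal composed with grade involution). Let a, b, c ∈ A and set d' := b^2 + (conj a)·a + b·(a + conj a). If d' is a unit of A, then x := ((conj a)·c + c·b)·d'⁻¹ (using the inverse of the unit d') satisfies the Sylvester equation a·x + x·b = c. -/

import Mathlib

/-- Clifford conjugation: reversal composed with grade involution. -/
noncomputable def cliffordConj {n : ℕ} (w : Fin n → ℝ) :
    CliffordAlgebra (QuadraticMap.weightedSumSquares ℝ w) →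
      CliffordAlgebra (QuadraticMap.weightedSumSquares ℝ w) :=
  fun a => CliffordAlgebra.reverse (CliffordAlgebra.involute a)

/-!
A two-dimensional Clifford algebra is a quaternion algebra, and Clifford conjugation is quaternion
conjugation, so `a + ā` and `ā * a` are scalars. Hence `a` commutes with `ā`, and expanding gives
`a * (ā * c + c * b) + (ā * c + c * b) * b = c * d'` with `d' = b² + ā * a + b * (a + ā)`.
As `d'` is a polynomial in `b` with central coefficients, its inverse commutes with `b`, and
multiplying on the right by `d'⁻¹` solves the equation.

Mathlib's `star` on `CliffordAlgebra Q` is by definition `cliffordConj`, so everything is stated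
with `star`.
-/

open CliffordAlgebra QuaternionAlgebra
open scoped Quaternion

section Sylvester

variable {A : Type*} [Ring A] {a a' b : A}

theorem Commute.of_add_mem_center (hs : a + a' ∈ Set.center A) : Commute a a' := by
  simpa using ((Set.mem_center_iff.mp hs).comm a).symm.sub_right (Commute.refl a)

theorem sylvester_mul_eq_mul (hs : a + a' ∈ Set.center A) (hn : a' * a ∈ Set.center A) (c : A) :
    a * (a' * c + c * b) + (a' * c + c * b) * b = c * (b ^ 2 + a' * a + b * (a + a')) :=
  calc a * (a' * c + c * b) + (a' * c + c * b) * b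
      = a * a' * c + (a + a') * (c * b) + c * b ^ 2 := by noncomm_ring
    _ = c * (a' * a) + c * b * (a + a') + c * b ^ 2 := by
      rw [(Commute.of_add_mem_center hs).eq, ((Set.mem_center_iff.mp hn).comm c).eq,
        ((Set.mem_center_iff.mp hs).comm _).eq]
    _ = c * (b ^ 2 + a' * a + b * (a + a')) := by noncomm_ring

theorem mul_inv_add_mul_inv_mul (u : Aˣ) (hu : Commute (u : A) b) (y : A) :
    a * (y * ↑u⁻¹) + y * ↑u⁻¹ * b = (a * y + y * b) * ↑u⁻¹ := by
  rw [mul_assoc y, hu.units_inv_left.eq]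
  noncomm_ring

theorem sylvester_solution_of_mem_center (hs : a + a' ∈ Set.center A)
    (hn : a' * a ∈ Set.center A) (c : A) (hd : IsUnit (b ^ 2 + a' * a + b * (a + a'))) :
    a * ((a' * c + c * b) * ↑hd.unit⁻¹) + (a' * c + c * b) * ↑hd.unit⁻¹ * b = c := by
  have hdb : Commute (↑hd.unit : A) b :=
    (((Commute.refl b).pow_left 2).add_left ((Set.mem_center_iff.mp hn).comm b)).add_left
      ((Commute.refl b).mul_left ((Set.mem_center_iff.mp hs).comm b))
  rw [mul_inv_add_mul_inv_mul _ hdb, sylvester_mul_eq_mul hs hn]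
  exact Units.mul_inv_cancel_right c hd.unit

end Sylvester

namespace CliffordAlgebra

variable {R : Type*} [CommRing R]

theorem map_star {M₁ M₂ : Type*} [AddCommGroup M₁] [AddCommGroup M₂] [Module R M₁] [Module R M₂]
    {Q₁ : QuadraticForm R M₁} {Q₂ : QuadraticForm R M₂} (f : Q₁ →qᵢ Q₂) (x : CliffordAlgebra Q₁) :
    map f (star x) = star (map f x) := by
  induction x using CliffordAlgebra.induction with
  | algebraMap r => simp [star_algebraMap]
  | ι m => simp [star_ι]
  | mul x y hx hy => rw [star_mul, map_mul, map_mul, hx, hy, star_mul]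
  | add x y hx hy => rw [star_add, map_add, map_add, hx, hy, star_add]

def weightedSumSquaresFinTwoIsometryEquiv (w : Fin 2 → R) :
    (QuadraticMap.weightedSumSquares R w).IsometryEquiv
      (CliffordAlgebraQuaternion.Q (w 0) (w 1)) where
  toLinearEquiv := LinearEquiv.finTwoArrow R R
  map_app' x := by
    simp [CliffordAlgebraQuaternion.Q_apply, QuadraticMap.weightedSumSquares_apply,
      Fin.sum_univ_two, LinearEquiv.finTwoArrow, smul_eq_mul]

def weightedSumSquaresFinTwoEquivQuaternion (w : Fin 2 → R) :
    CliffordAlgebra (QuadraticMap.weightedSumSquares R w) ≃ₐ[R] ℍ[R,w 0,0,w 1] :=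
  (equivOfIsometry (weightedSumSquaresFinTwoIsometryEquiv w)).trans CliffordAlgebraQuaternion.equiv

variable {w : Fin 2 → R}

theorem weightedSumSquaresFinTwoEquivQuaternion_star
    (x : CliffordAlgebra (QuadraticMap.weightedSumSquares R w)) :
    weightedSumSquaresFinTwoEquivQuaternion w (star x) =
      star (weightedSumSquaresFinTwoEquivQuaternion w x) := by
  simp only [weightedSumSquaresFinTwoEquivQuaternion, AlgEquiv.trans_apply, equivOfIsometry_apply,
    map_star, CliffordAlgebraQuaternion.equiv_apply, CliffordAlgebraQuaternion.toQuaternion_star]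

theorem star_mul_self_mem_center_of_finTwo
    (x : CliffordAlgebra (QuadraticMap.weightedSumSquares R w)) :
    star x * x ∈ Set.center _ := by
  set e := weightedSumSquaresFinTwoEquivQuaternion w
  have : star x * x = algebraMap R _ (star (e x) * e x).re := by
    apply e.injective
    rw [map_mul, weightedSumSquaresFinTwoEquivQuaternion_star, AlgEquiv.commutes]
    exact star_mul_eq_coe _
  exact this ▸ Set.algebraMap_mem_center _

theorem add_star_mem_center_of_finTwo
    (x : CliffordAlgebra (QuadraticMap.weightedSumSquares R w)) :
    x + star x ∈ Set.center _ := by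
  set e := weightedSumSquaresFinTwoEquivQuaternion w
  have : x + star x = algebraMap R _ (2 * (e x).re + 0 * (e x).imI) := by
    apply e.injective
    rw [map_add, weightedSumSquaresFinTwoEquivQuaternion_star, AlgEquiv.commutes]
    exact self_add_star' _
  exact this ▸ Set.algebraMap_mem_center _

end CliffordAlgebra

theorem clifford2_sylvester_right_solution_general (w : Fin 2 → ℝ)
    (a b c : CliffordAlgebra (QuadraticMap.weightedSumSquares ℝ w))
    (hd : IsUnit (b ^ 2 + cliffordConj w a * a + b * (a + cliffordConj w a))) :
    a * ((cliffordConj w a * c + c * b) * ↑hd.unit⁻¹) +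
      ((cliffordConj w a * c + c * b) * ↑hd.unit⁻¹) * b = c :=
  sylvester_solution_of_mem_center (add_star_mem_center_of_finTwo a)
    (star_mul_self_mem_center_of_finTwo a) c hd

theorem clifford2_sylvester_right_solution (w : Fin 2 → ℝ)
    (hw : ∀ i, w i = 1 ∨ w i = -1)
    (a b c : CliffordAlgebra (QuadraticMap.weightedSumSquares ℝ w))
    (hd : IsUnit (b ^ 2 + cliffordConj w a * a + b * (a + cliffordConj w a))) :
    a * ((cliffordConj w a * c + c * b) * ↑hd.unit⁻¹) +
      ((cliffordConj w a * c + c * b) * ↑hd.unit⁻¹) * b = c :=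
  clifford2_sylvester_right_solution_general w a b c hd
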